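/- arXiv:2604.00185 — 2 statements merged into one kernel-verified Lean document; each statement's English description precedes it below -/
import Mathlib

section
/- Let P be a two-orbit n-polytope in class 2_I with I = N \ {j} for some j ∈ N. Then P is i-face transitive for every i ≠ j, and Γ(P) has exactly two orbits on the j-faces of P, represented by the j-faces Φ_j and (Φ^j)_j of any pair of j-adjacent flags Φ, Φ^j. -/
/-- An abstract polytope of rank `n`, presented by a partially ordered type of faces
with a strictly monotone rank function onto `{-1, 0, ..., n}`, such that every flag
(maximal chain) has exactly one face of each rank (`faceAt`), every flag has a unique
`i`-adjacent flag for each `i = 0, ..., n-1` (the diamond condition, via `adj`), and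
which is strongly flag-connected. -/
structure AbstractPolytope (n : ℕ) (Face : Type*) [PartialOrder Face] where
  rank : Face → ℤ
  rank_strictMono : ∀ {F G : Face}, F < G → rank F < rank G
  rank_le : ∀ F : Face, -1 ≤ rank F ∧ rank F ≤ (n : ℤ)
  /-- the unique face of rank `i` in the flag `Φ`, for `-1 ≤ i ≤ n` -/
  faceAt : Flag Face → ℤ → Face
  faceAt_mem : ∀ (Φ : Flag Face) (i : ℤ), -1 ≤ i → i ≤ (n : ℤ) → faceAt Φ i ∈ Φ
  faceAt_rank : ∀ (Φ : Flag Face) (i : ℤ), -1 ≤ i → i ≤ (n : ℤ) → rank (faceAt Φ i) = i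
  faceAt_eq : ∀ (Φ : Flag Face) (F : Face), F ∈ Φ → faceAt Φ (rank F) = F
  /-- the unique `i`-adjacent flag of `Φ`, for `0 ≤ i ≤ n-1` -/
  adj : Flag Face → ℕ → Flag Face
  adj_ne : ∀ (Φ : Flag Face) (i : ℕ), i < n → adj Φ i ≠ Φ
  adj_mem : ∀ (Φ : Flag Face) (i : ℕ), i < n →
    ∀ F ∈ Φ, rank F ≠ (i : ℤ) → F ∈ adj Φ i
  adj_unique : ∀ (Φ Ψ : Flag Face) (i : ℕ), i < n → Ψ ≠ Φ →
    (∀ F ∈ Φ, rank F ≠ (i : ℤ) → F ∈ Ψ) → Ψ = adj Φ i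
  /-- strong flag-connectedness: any two flags are joined by a sequence of successively
  adjacent flags, with all adjacencies at ranks not occurring among their common faces -/
  connected : ∀ Φ Ψ : Flag Face, ∃ (l : ℕ) (c : ℕ → Flag Face), c 0 = Φ ∧ c l = Ψ ∧
    ∀ m < l, ∃ i : ℕ, i < n ∧ c (m + 1) = adj (c m) i ∧
      ∀ F : Face, F ∈ Φ → F ∈ Ψ → rank F ≠ (i : ℤ)

namespace AbstractPolytope

variable {n : ℕ} {Face : Type*} [PartialOrder Face]

/-- The automorphism group `Γ(P)`: order automorphisms of the set of faces.
It acts on flags via `Flag.map`; `g • Φ` denotes the image flag. -/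
instance : MulAction (Face ≃o Face) (Flag Face) where
  smul g Φ := Flag.map g Φ
  one_smul Φ := by
    show Flag.map 1 Φ = Φ
    ext x
    simp [Flag.map, Flag.ofIsMaxChain]
  mul_smul g h Φ := by
    show Flag.map (g * h) Φ = Flag.map g (Flag.map h Φ)
    ext x
    simp [Flag.map, Flag.ofIsMaxChain, Set.image_image]

lemma smul_flag_def (g : Face ≃o Face) (Φ : Flag Face) : g • Φ = Flag.map g Φ := rfl

/-- Two flags lie in the same orbit under the automorphism group. -/
def SameOrbit (Φ Ψ : Flag Face) : Prop := ∃ g : Face ≃o Face, g • Φ = Ψ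

/-- The polytope has exactly two orbits on flags. -/
def TwoOrbit (_A : AbstractPolytope n Face) : Prop :=
  ∃ Φ Ψ : Flag Face, ¬ SameOrbit Φ Ψ ∧ ∀ X : Flag Face, SameOrbit X Φ ∨ SameOrbit X Ψ

/-- `I` is the class type set of the two-orbit polytope `A`: it consists precisely of
those ranks `i ∈ {0,...,n-1}` such that every flag and its `i`-adjacent flag lie in the
same orbit; that is, `A` is in the class `2_I`. -/
def InClass (A : AbstractPolytope n Face) (I : Set ℕ) : Prop :=
  (∀ i ∈ I, i < n) ∧ ∀ i : ℕ, i < n → (i ∈ I ↔ ∀ Φ : Flag Face, SameOrbit Φ (A.adj Φ i))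

/-- The stabilizer in the automorphism group of a face `F`. -/
def faceStab (_A : AbstractPolytope n Face) (F : Face) : Subgroup (Face ≃o Face) where
  carrier := {g : Face ≃o Face | g F = F}
  one_mem' := rfl
  mul_mem' := by
    intro a b ha hb
    show (a * b) F = F
    rw [RelIso.mul_apply]
    rw [show b F = F from hb, show a F = F from ha]
  inv_mem' := by
    intro a ha
    show a⁻¹ F = F
    conv_lhs => rw [← show a F = F from ha]
    exact a.symm_apply_apply F

lemma mem_faceStab {A : AbstractPolytope n Face} {F : Face} {g : Face ≃o Face} :
    g ∈ A.faceStab F ↔ g F = F := Iff.rfl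

end AbstractPolytope

/-!
Since `I = N \ {j}`, every `i`-adjacency with `i ≠ j` stays inside a flag orbit. Following a
flag-connecting sequence from `Ψ`, each `j`-step maps the orbits of `Ψ` and `Ψ^j` to each other
(automorphisms commute with adjacency and `(Ψ^j)^j = Ψ`), so every flag lies in the orbit of `Ψ`
or of `Ψ^j`. Some flag is not in the orbit of its `j`-adjacent flag because `j ∉ I`, hence no flag
is; and two flags with a common `j`-face are joined by a sequence avoiding rank `j`, so they lie
in the same orbit. Reading off the `i`-faces of these flags gives the theorem.
-/

theorem Int.eqOn_id_of_strictMonoOn_Icc {a b : ℤ} {f : ℤ → ℤ}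
    (hf : StrictMonoOn f (Set.Icc a b)) (hmaps : Set.MapsTo f (Set.Icc a b) (Set.Icc a b)) :
    Set.EqOn f id (Set.Icc a b) := by
  have growth : ∀ x ∈ Set.Icc a b, ∀ y, x ≤ y → y ≤ b → f x + (y - x) ≤ f y := by
    intro x hx y hxy
    induction y, hxy using Int.leInduction with
    | base => intro _; omega
    | succ y hxy ih =>
      intro hyb
      have hlt : f y < f (y + 1) :=
        hf ⟨by linarith [hx.1], by omega⟩ ⟨by linarith [hx.1], hyb⟩ (Int.lt_succ y)
      linarith [ih (by omega)]
  intro x hx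
  have ha : a ∈ Set.Icc a b := ⟨le_rfl, hx.1.trans hx.2⟩
  have hb : b ∈ Set.Icc a b := ⟨hx.1.trans hx.2, le_rfl⟩
  have h₁ := growth a ha x hx.1 hx.2
  have h₂ := growth x hx b hx.2 le_rfl
  have h₃ := (hmaps ha).1
  have h₄ := (hmaps hb).2
  show f x = x
  omega

namespace AbstractPolytope

variable {n : ℕ} {Face : Type*} [PartialOrder Face]

theorem SameOrbit.refl (Φ : Flag Face) : SameOrbit Φ Φ := ⟨1, one_smul _ _⟩

theorem SameOrbit.symm {Φ Ψ : Flag Face} (h : SameOrbit Φ Ψ) : SameOrbit Ψ Φ := by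
  obtain ⟨g, rfl⟩ := h
  exact ⟨g⁻¹, inv_smul_smul g Φ⟩

theorem SameOrbit.trans {Φ Ψ X : Flag Face} (h : SameOrbit Φ Ψ) (h' : SameOrbit Ψ X) :
    SameOrbit Φ X := by
  obtain ⟨g, rfl⟩ := h
  obtain ⟨g', rfl⟩ := h'
  exact ⟨g' * g, mul_smul g' g Φ⟩

theorem mem_smul_flag_iff {g : Face ≃o Face} {Φ : Flag Face} {F : Face} :
    F ∈ g • Φ ↔ g⁻¹ F ∈ Φ := by
  rw [smul_flag_def, ← SetLike.mem_coe, Flag.coe_map, OrderIso.image_eq_preimage_symm]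
  rfl

theorem apply_mem_smul_flag {g : Face ≃o Face} {Φ : Flag Face} {F : Face} (h : F ∈ Φ) :
    g F ∈ g • Φ := by
  rwa [mem_smul_flag_iff, ← RelIso.mul_apply, inv_mul_cancel, RelIso.coe_one, id]

variable (A : AbstractPolytope n Face)

theorem exists_faceAt_eq {F : Face} {i : ℤ} (hF : A.rank F = i) :
    ∃ Φ : Flag Face, A.faceAt Φ i = F := by
  obtain ⟨Φ, hΦ⟩ := Flag.exists_mem F
  exact ⟨Φ, hF ▸ A.faceAt_eq Φ F hΦ⟩

theorem faceAt_strictMonoOn (Φ : Flag Face) :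
    StrictMonoOn (A.faceAt Φ) (Set.Icc (-1) n) := by
  intro a ha b hb hab
  have hra := A.faceAt_rank Φ a ha.1 ha.2
  have hrb := A.faceAt_rank Φ b hb.1 hb.2
  rcases Φ.le_or_le (A.faceAt_mem Φ a ha.1 ha.2) (A.faceAt_mem Φ b hb.1 hb.2) with h | h
  · exact h.lt_of_ne fun heq => by rw [heq] at hra; omega
  · rcases h.lt_or_eq with h | heq
    · have := A.rank_strictMono h
      omega
    · rw [heq] at hrb
      omega

theorem rank_apply (g : Face ≃o Face) (F : Face) : A.rank (g F) = A.rank F := by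
  obtain ⟨Φ, hΦ⟩ := Flag.exists_mem F
  have hrank : StrictMono A.rank := fun _ _ h => A.rank_strictMono h
  have hfix := Int.eqOn_id_of_strictMonoOn_Icc
    ((hrank.comp g.strictMono).comp_strictMonoOn (A.faceAt_strictMonoOn Φ))
    (fun i _ => A.rank_le _) (A.rank_le F)
  simpa only [Function.comp, A.faceAt_eq Φ F hΦ, id] using hfix

theorem faceAt_smul (g : Face ≃o Face) (Φ : Flag Face) {i : ℤ} (h₁ : -1 ≤ i) (h₂ : i ≤ n) :
    A.faceAt (g • Φ) i = g (A.faceAt Φ i) := by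
  have h := A.faceAt_eq (g • Φ) _ (apply_mem_smul_flag (A.faceAt_mem Φ i h₁ h₂))
  rwa [rank_apply, A.faceAt_rank Φ i h₁ h₂] at h

theorem adj_smul (g : Face ≃o Face) (Φ : Flag Face) {i : ℕ} (hi : i < n) :
    A.adj (g • Φ) i = g • A.adj Φ i := by
  refine (A.adj_unique _ _ i hi (fun h => A.adj_ne Φ i hi (smul_left_cancel g h)) ?_).symm
  intro F hF hrF
  rw [mem_smul_flag_iff] at hF ⊢
  exact A.adj_mem Φ i hi _ hF (by rwa [rank_apply])

theorem faceAt_adj_of_ne (Φ : Flag Face) {i : ℤ} {j : ℕ} (hj : j < n) (h₁ : -1 ≤ i)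
    (h₂ : i ≤ n) (hij : i ≠ j) : A.faceAt (A.adj Φ j) i = A.faceAt Φ i := by
  have h := A.faceAt_eq (A.adj Φ j) _ (A.adj_mem Φ j hj _ (A.faceAt_mem Φ i h₁ h₂)
    (by rwa [A.faceAt_rank Φ i h₁ h₂]))
  rwa [A.faceAt_rank Φ i h₁ h₂] at h

theorem adj_adj (Φ : Flag Face) {i : ℕ} (hi : i < n) : A.adj (A.adj Φ i) i = Φ := by
  refine (A.adj_unique _ Φ i hi (A.adj_ne Φ i hi).symm fun F hF hrF => ?_).symm
  obtain ⟨h₁, h₂⟩ := A.rank_le F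
  rw [← A.faceAt_eq _ F hF, A.faceAt_adj_of_ne Φ hi h₁ h₂ hrF]
  exact A.faceAt_mem Φ _ h₁ h₂

theorem exists_apply_faceAt_eq_of_sameOrbit {Φ Ψ : Flag Face} (h : SameOrbit Φ Ψ) {i : ℤ}
    (h₁ : -1 ≤ i) (h₂ : i ≤ n) : ∃ g : Face ≃o Face, g (A.faceAt Φ i) = A.faceAt Ψ i := by
  obtain ⟨g, rfl⟩ := h
  exact ⟨g, (A.faceAt_smul g Φ h₁ h₂).symm⟩

theorem SameOrbit.adj {Φ Ψ : Flag Face} (h : SameOrbit Φ Ψ) {i : ℕ} (hi : i < n) :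
    SameOrbit (A.adj Φ i) (A.adj Ψ i) := by
  obtain ⟨g, rfl⟩ := h
  exact ⟨g, (A.adj_smul g Φ hi).symm⟩

theorem connected_induction {p : Flag Face → Prop} {Φ Ψ : Flag Face} (hΦ : p Φ)
    (hstep : ∀ X i, i < n → (∀ F ∈ Φ, F ∈ Ψ → A.rank F ≠ i) → p X → p (A.adj X i)) :
    p Ψ := by
  obtain ⟨l, c, rfl, rfl, hc⟩ := A.connected Φ Ψ
  suffices ∀ m ≤ l, p (c m) from this l le_rfl
  intro m hm
  induction m with
  | zero => exact hΦ
  | succ m ih =>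
    obtain ⟨i, hi, hcm, hcommon⟩ := hc m hm
    rw [hcm]
    exact hstep _ i hi hcommon (ih (by omega))

theorem sameOrbit_adj_of_inClass {I : Set ℕ} (hI : A.InClass I) {i : ℕ} (hi : i ∈ I)
    (Φ : Flag Face) : SameOrbit Φ (A.adj Φ i) :=
  (hI.2 i (hI.1 i hi)).1 hi Φ

theorem exists_not_sameOrbit_adj_of_inClass {I : Set ℕ} (hI : A.InClass I) {i : ℕ}
    (hi : i < n) (hiI : i ∉ I) : ∃ Φ : Flag Face, ¬ SameOrbit Φ (A.adj Φ i) := by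
  by_contra! h
  exact hiI ((hI.2 i hi).2 h)

section AdjacenciesOffRankPreserveOrbits

variable {A} {j : ℕ} (hj : j < n)
  (hadj : ∀ i < n, i ≠ j → ∀ Φ : Flag Face, SameOrbit Φ (A.adj Φ i))
include hadj

theorem sameOrbit_of_mem_of_mem {Φ Ψ : Flag Face} {F : Face} (hΦ : F ∈ Φ) (hΨ : F ∈ Ψ)
    (hF : A.rank F = j) : SameOrbit Φ Ψ :=
  A.connected_induction (SameOrbit.refl Φ) fun X i hi hcommon hX =>
    hX.trans (hadj i hi (fun hij => hcommon F hΦ hΨ (hij ▸ hF)) X)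

include hj

theorem sameOrbit_or_sameOrbit_adj (Ψ Φ : Flag Face) :
    SameOrbit Ψ Φ ∨ SameOrbit (A.adj Ψ j) Φ := by
  refine A.connected_induction (p := fun X => SameOrbit Ψ X ∨ SameOrbit (A.adj Ψ j) X)
    (Or.inl (SameOrbit.refl Ψ)) fun X i hi _ hX => ?_
  by_cases hij : i = j
  · subst hij
    rcases hX with hX | hX
    · exact Or.inr (hX.adj A hi)
    · exact Or.inl (by simpa only [A.adj_adj Ψ hi] using hX.adj A hi)
  · exact hX.imp (fun h => h.trans (hadj i hi hij X)) (fun h => h.trans (hadj i hi hij X))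

theorem not_sameOrbit_adj {Φ₀ : Flag Face} (hΦ₀ : ¬ SameOrbit Φ₀ (A.adj Φ₀ j))
    (Φ : Flag Face) : ¬ SameOrbit Φ (A.adj Φ j) := by
  intro hΦ
  have hΦΦ₀ : SameOrbit Φ Φ₀ :=
    (sameOrbit_or_sameOrbit_adj hj hadj Φ Φ₀).elim id hΦ.trans
  exact hΦ₀ ((hΦΦ₀.symm.trans hΦ).trans (hΦΦ₀.adj A hj))

theorem sameOrbit_of_apply_faceAt_eq {Φ Ψ : Flag Face} {g : Face ≃o Face}
    (hg : g (A.faceAt Φ j) = A.faceAt Ψ j) : SameOrbit Φ Ψ := by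
  have hj₁ : (-1 : ℤ) ≤ j := by omega
  have hj₂ : (j : ℤ) ≤ n := by omega
  refine SameOrbit.trans ⟨g, rfl⟩
    (sameOrbit_of_mem_of_mem hadj ?_ (A.faceAt_mem Ψ j hj₁ hj₂) (A.faceAt_rank Ψ j hj₁ hj₂))
  rw [← hg, ← A.faceAt_smul g Φ hj₁ hj₂]
  exact A.faceAt_mem (g • Φ) j hj₁ hj₂

end AdjacenciesOffRankPreserveOrbits

end AbstractPolytope

open AbstractPolytope in
theorem stmt5_general {n : ℕ} {Face : Type*} [PartialOrder Face] (A : AbstractPolytope n Face)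
    (j : ℕ) (hj : j < n)
    (hI : A.InClass {i : ℕ | i < n ∧ i ≠ j}) :
    (∀ i : ℕ, i < n → i ≠ j → ∀ F G : Face, A.rank F = (i : ℤ) → A.rank G = (i : ℤ) →
        ∃ g : Face ≃o Face, g F = G)
    ∧ ∀ Φ : Flag Face,
        (∀ F : Face, A.rank F = (j : ℤ) →
          (∃ g : Face ≃o Face, g (A.faceAt Φ (j : ℤ)) = F) ∨
          (∃ g : Face ≃o Face, g (A.faceAt (A.adj Φ j) (j : ℤ)) = F))
        ∧ ¬ ∃ g : Face ≃o Face, g (A.faceAt Φ (j : ℤ)) = A.faceAt (A.adj Φ j) (j : ℤ) := by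
  have hadj : ∀ i < n, i ≠ j → ∀ Φ : Flag Face, SameOrbit Φ (A.adj Φ i) :=
    fun i hi hij => A.sameOrbit_adj_of_inClass hI ⟨hi, hij⟩
  obtain ⟨Φ₀, hΦ₀⟩ := A.exists_not_sameOrbit_adj_of_inClass hI hj fun h => h.2 rfl
  have hcover := sameOrbit_or_sameOrbit_adj hj hadj
  refine ⟨fun i hi hij F G hF hG => ?_, fun Φ => ⟨fun F hF => ?_, fun ⟨g, hg⟩ =>
    not_sameOrbit_adj hj hadj hΦ₀ Φ (sameOrbit_of_apply_faceAt_eq hj hadj hg)⟩⟩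
  · obtain ⟨Φ, rfl⟩ := A.exists_faceAt_eq hF
    obtain ⟨Ψ, rfl⟩ := A.exists_faceAt_eq hG
    have hi₁ : (-1 : ℤ) ≤ i := by omega
    have hi₂ : (i : ℤ) ≤ n := by omega
    rcases hcover Φ Ψ with h | h
    · exact A.exists_apply_faceAt_eq_of_sameOrbit h hi₁ hi₂
    · rw [← A.faceAt_adj_of_ne Φ hj hi₁ hi₂ (by exact_mod_cast hij)]
      exact A.exists_apply_faceAt_eq_of_sameOrbit h hi₁ hi₂
  · obtain ⟨Ψ, rfl⟩ := A.exists_faceAt_eq hF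
    exact (hcover Φ Ψ).imp (A.exists_apply_faceAt_eq_of_sameOrbit · (by omega) (by omega))
      (A.exists_apply_faceAt_eq_of_sameOrbit · (by omega) (by omega))

open AbstractPolytope in
/-- A two-orbit polytope in class `2_{N \ {j}}` is `i`-face transitive for
every `i ≠ j`, and has exactly two orbits on `j`-faces, represented by the `j`-faces of
any pair of `j`-adjacent flags. -/
theorem stmt5 {n : ℕ} {Face : Type*} [PartialOrder Face] (A : AbstractPolytope n Face)
    (j : ℕ) (hj : j < n) (h2 : A.TwoOrbit)
    (hI : A.InClass {i : ℕ | i < n ∧ i ≠ j}) :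
    (∀ i : ℕ, i < n → i ≠ j → ∀ F G : Face, A.rank F = (i : ℤ) → A.rank G = (i : ℤ) →
        ∃ g : Face ≃o Face, g F = G)
    ∧ ∀ Φ : Flag Face,
        (∀ F : Face, A.rank F = (j : ℤ) →
          (∃ g : Face ≃o Face, g (A.faceAt Φ (j : ℤ)) = F) ∨
          (∃ g : Face ≃o Face, g (A.faceAt (A.adj Φ j) (j : ℤ)) = F))
        ∧ ¬ ∃ g : Face ≃o Face, g (A.faceAt Φ (j : ℤ)) = A.faceAt (A.adj Φ j) (j : ℤ) :=
  stmt5_general A j hj hI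
end

section
/- Let P be a two-orbit n-polytope in class 2_I with base flag Φ, and suppose i ∈ I and j, i+1 ∉ I with |j - i| ≥ 2. Then α_{j,i+1} ρ_i α_{i+1,j} = α_{i+1,i,i+1} in Γ(P). -/
namespace AbstractPolytope

variable {n : ℕ} {Face : Type*} [PartialOrder Face]

/-! ### Auxiliary lemmas -/

variable (A : AbstractPolytope n Face)

lemma mem_smul_iff {g : Face ≃o Face} {Ψ : Flag Face} {F : Face} :
    F ∈ g • Ψ ↔ ∃ G ∈ Ψ, g G = F := by
  rw [smul_flag_def, ← SetLike.mem_coe, Flag.coe_map]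
  simp [Set.mem_image]

lemma smul_mem_smul {g : Face ≃o Face} {Ψ : Flag Face} {F : Face} (h : F ∈ Ψ) :
    g F ∈ g • Ψ := mem_smul_iff.2 ⟨F, h, rfl⟩

lemma lt_of_rank_lt {Ψ : Flag Face} {F G : Face} (hF : F ∈ Ψ) (hG : G ∈ Ψ)
    (h : A.rank F < A.rank G) : F < G := by
  rcases Ψ.le_or_le hF hG with h1 | h1
  · exact h1.lt_of_ne (by rintro rfl; exact absurd h (lt_irrefl _))
  · exfalso
    have : A.rank G ≤ A.rank F := by
      rcases h1.eq_or_lt with e | l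
      · rw [e]
      · exact (A.rank_strictMono l).le
    omega

lemma le_of_rank_le {Ψ : Flag Face} {F G : Face} (hF : F ∈ Ψ) (hG : G ∈ Ψ)
    (h : A.rank F ≤ A.rank G) : F ≤ G := by
  rcases h.eq_or_lt with e | l
  · have h1 := A.faceAt_eq Ψ F hF
    have h2 := A.faceAt_eq Ψ G hG
    rw [← h1, ← h2, e]
  · exact (A.lt_of_rank_lt hF hG l).le

lemma faceAt_adj {Ψ : Flag Face} {m : ℕ} (hm : m < n) {k : ℤ} (hk1 : -1 ≤ k)
    (hk2 : k ≤ (n : ℤ)) (hne : k ≠ (m : ℤ)) :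
    A.faceAt (A.adj Ψ m) k = A.faceAt Ψ k := by
  have h1 : A.faceAt Ψ k ∈ A.adj Ψ m :=
    A.adj_mem Ψ m hm _ (A.faceAt_mem Ψ k hk1 hk2)
      (by rw [A.faceAt_rank Ψ k hk1 hk2]; exact hne)
  have h2 := A.faceAt_eq (A.adj Ψ m) _ h1
  rwa [A.faceAt_rank Ψ k hk1 hk2] at h2

lemma flag_ext {Ψ₁ Ψ₂ : Flag Face}
    (h : ∀ k : ℤ, -1 ≤ k → k ≤ (n : ℤ) → A.faceAt Ψ₁ k = A.faceAt Ψ₂ k) : Ψ₁ = Ψ₂ := by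
  have key : ∀ (Θ₁ Θ₂ : Flag Face),
      (∀ k : ℤ, -1 ≤ k → k ≤ (n : ℤ) → A.faceAt Θ₁ k = A.faceAt Θ₂ k) →
      ∀ F, F ∈ Θ₁ → F ∈ Θ₂ := by
    intro Θ₁ Θ₂ hk F hF
    have hb := A.rank_le F
    have h1 := A.faceAt_eq Θ₁ F hF
    rw [← h1, hk _ hb.1 hb.2]
    exact A.faceAt_mem _ _ hb.1 hb.2
  apply Flag.ext
  ext F
  exact ⟨key Ψ₁ Ψ₂ h F, key Ψ₂ Ψ₁ (fun k a b => (h k a b).symm) F⟩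

lemma mem_of_mem_adj {Ψ : Flag Face} {m : ℕ} (hm : m < n) {F : Face}
    (hF : F ∈ A.adj Ψ m) (hr : A.rank F ≠ (m : ℤ)) : F ∈ Ψ := by
  have hb := A.rank_le F
  have h1 := A.faceAt_eq (A.adj Ψ m) F hF
  rw [A.faceAt_adj hm hb.1 hb.2 hr] at h1
  rw [← h1]
  exact A.faceAt_mem _ _ hb.1 hb.2

lemma adj_adj_s10 {Ψ : Flag Face} {m : ℕ} (hm : m < n) : A.adj (A.adj Ψ m) m = Ψ :=
  (A.adj_unique (A.adj Ψ m) Ψ m hm (Ne.symm (A.adj_ne Ψ m hm))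
    (fun _ hF hr => A.mem_of_mem_adj hm hF hr)).symm

lemma diamond {Ψ : Flag Face} {a : ℕ} (ha : a < n) {G : Face} (hG : A.rank G = (a : ℤ))
    (h1 : A.faceAt Ψ ((a : ℤ) - 1) < G) (h2 : G < A.faceAt Ψ ((a : ℤ) + 1)) :
    G = A.faceAt Ψ a ∨ G = A.faceAt (A.adj Ψ a) a := by
  by_cases hGa : G = A.faceAt Ψ a
  · exact Or.inl hGa
  right
  have ham1 : (-1 : ℤ) ≤ (a : ℤ) - 1 := by omega
  have ham2 : (a : ℤ) - 1 ≤ (n : ℤ) := by omega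
  have hap1 : (-1 : ℤ) ≤ (a : ℤ) + 1 := by omega
  have hap2 : (a : ℤ) + 1 ≤ (n : ℤ) := by omega
  have han1 : (-1 : ℤ) ≤ (a : ℤ) := by omega
  have han2 : (a : ℤ) ≤ (n : ℤ) := by omega
  set s : Set Face := ((Ψ : Set Face) \ {A.faceAt Ψ a}) ∪ {G} with hs
  have hGs : G ∈ s := Or.inr rfl
  -- any face of `Ψ` of rank `≠ a` is comparable with `G`
  have hcomp : ∀ F, F ∈ Ψ → A.rank F ≠ (a : ℤ) → F < G ∨ G < F := by
    intro F hF hr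
    have hb := A.rank_le F
    by_cases hle : A.rank F ≤ (a : ℤ) - 1
    · left
      refine lt_of_le_of_lt ?_ h1
      exact A.le_of_rank_le hF (A.faceAt_mem Ψ _ ham1 ham2)
        (by rw [A.faceAt_rank Ψ _ ham1 ham2]; exact hle)
    · right
      refine lt_of_lt_of_le h2 ?_
      exact A.le_of_rank_le (A.faceAt_mem Ψ _ hap1 hap2) hF
        (by rw [A.faceAt_rank Ψ _ hap1 hap2]; omega)
  have hmemr : ∀ F, F ∈ (Ψ : Set Face) \ {A.faceAt Ψ a} → A.rank F ≠ (a : ℤ) := by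
    intro F hF hr
    apply hF.2
    have := A.faceAt_eq Ψ F hF.1
    rw [hr] at this
    exact Set.mem_singleton_iff.2 this.symm
  have hchain : IsChain (· ≤ ·) s := by
    rintro F hF K hK hne
    rcases hF with hF | hF <;> rcases hK with hK | hK
    · exact Ψ.le_or_le hF.1 hK.1
    · rw [Set.mem_singleton_iff.1 hK]
      rcases hcomp F hF.1 (hmemr F hF) with h | h
      · exact Or.inl h.le
      · exact Or.inr h.le
    · rw [Set.mem_singleton_iff.1 hF]
      rcases hcomp K hK.1 (hmemr K hK) with h | h
      · exact Or.inr h.le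
      · exact Or.inl h.le
    · rw [Set.mem_singleton_iff.1 hF, Set.mem_singleton_iff.1 hK]
      exact Or.inl le_rfl
  have hmax : IsMaxChain (· ≤ ·) s := by
    refine ⟨hchain, fun t ht hst => (Set.Subset.antisymm hst ?_)⟩
    intro H hH
    have hbH := A.rank_le H
    have heq : ∀ K, K ∈ s → A.rank K = A.rank H → H = K := by
      intro K hKs hrk
      rcases ht.total hH (hst hKs) with hl | hl
      · rcases hl.eq_or_lt with e | l
        · exact e
        · exact absurd (A.rank_strictMono l) (by omega)
      · rcases hl.eq_or_lt with e | l
        · exact e.symm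
        · exact absurd (A.rank_strictMono l) (by omega)
    by_cases hra : A.rank H = (a : ℤ)
    · rw [heq G hGs (by omega)]; exact hGs
    · have hKmem : A.faceAt Ψ (A.rank H) ∈ s := by
        left
        refine ⟨A.faceAt_mem Ψ _ hbH.1 hbH.2, ?_⟩
        intro hc
        have := A.faceAt_rank Ψ (A.rank H) hbH.1 hbH.2
        rw [Set.mem_singleton_iff.1 hc, A.faceAt_rank Ψ _ han1 han2] at this
        omega
      rw [heq _ hKmem (A.faceAt_rank Ψ _ hbH.1 hbH.2)]
      exact hKmem
  set Ψ' : Flag Face := Flag.ofIsMaxChain s hmax with hΨ'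
  have hmem' : ∀ F, F ∈ s → F ∈ Ψ' := fun F hF => hF
  have hGΨ' : G ∈ Ψ' := hmem' G hGs
  have hne' : Ψ' ≠ Ψ := by
    intro e
    apply hGa
    have hGΨ : G ∈ Ψ := e ▸ hGΨ'
    have := A.faceAt_eq Ψ G hGΨ
    rw [hG] at this
    exact this.symm
  have hadj : Ψ' = A.adj Ψ a := by
    apply A.adj_unique Ψ Ψ' a ha hne'
    intro F hF hr
    apply hmem'
    left
    exact ⟨hF, fun hc => hr (by
      rw [Set.mem_singleton_iff.1 hc]
      exact A.faceAt_rank Ψ _ han1 han2)⟩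
  have hGadj : G ∈ A.adj Ψ a := hadj ▸ hGΨ'
  have := A.faceAt_eq (A.adj Ψ a) G hGadj
  rw [hG] at this
  exact this.symm

lemma adj_comm {Ψ : Flag Face} {a b : ℕ} (ha : a < n) (hb : b < n)
    (hab : a + 2 ≤ b ∨ b + 2 ≤ a) :
    A.adj (A.adj Ψ a) b = A.adj (A.adj Ψ b) a := by
  have hne1 : (a : ℤ) - 1 ≠ (b : ℤ) := by omega
  have hne2 : (a : ℤ) + 1 ≠ (b : ℤ) := by omega
  have hne3 : (a : ℤ) ≠ (b : ℤ) := by omega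
  have hne4 : (b : ℤ) ≠ (a : ℤ) := by omega
  have ham1 : (-1 : ℤ) ≤ (a : ℤ) - 1 := by omega
  have ham2 : (a : ℤ) - 1 ≤ (n : ℤ) := by omega
  have hap1 : (-1 : ℤ) ≤ (a : ℤ) + 1 := by omega
  have hap2 : (a : ℤ) + 1 ≤ (n : ℤ) := by omega
  have han1 : (-1 : ℤ) ≤ (a : ℤ) := by omega
  have han2 : (a : ℤ) ≤ (n : ℤ) := by omega
  have hbn1 : (-1 : ℤ) ≤ (b : ℤ) := by omega
  have hbn2 : (b : ℤ) ≤ (n : ℤ) := by omega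
  set X : Flag Face := A.adj (A.adj Ψ a) b with hX
  set G : Face := A.faceAt (A.adj X a) a with hGdef
  have hrG : A.rank G = (a : ℤ) := A.faceAt_rank _ _ han1 han2
  -- faces of `adj X a` at ranks `a ± 1` coincide with those of `Ψ`
  have hfm : A.faceAt (A.adj X a) ((a : ℤ) - 1) = A.faceAt Ψ ((a : ℤ) - 1) := by
    rw [A.faceAt_adj ha ham1 ham2 (by omega), hX, A.faceAt_adj hb ham1 ham2 hne1,
      A.faceAt_adj ha ham1 ham2 (by omega)]
  have hfp : A.faceAt (A.adj X a) ((a : ℤ) + 1) = A.faceAt Ψ ((a : ℤ) + 1) := by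
    rw [A.faceAt_adj ha hap1 hap2 (by omega), hX, A.faceAt_adj hb hap1 hap2 hne2,
      A.faceAt_adj ha hap1 hap2 (by omega)]
  have hGm : A.faceAt Ψ ((a : ℤ) - 1) < G := by
    rw [← hfm]
    exact A.lt_of_rank_lt (A.faceAt_mem _ _ ham1 ham2) (A.faceAt_mem _ _ han1 han2)
      (by rw [A.faceAt_rank _ _ ham1 ham2, A.faceAt_rank _ _ han1 han2]; omega)
  have hGp : G < A.faceAt Ψ ((a : ℤ) + 1) := by
    rw [← hfp]
    exact A.lt_of_rank_lt (A.faceAt_mem _ _ han1 han2) (A.faceAt_mem _ _ hap1 hap2)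
      (by rw [A.faceAt_rank _ _ hap1 hap2, A.faceAt_rank _ _ han1 han2]; omega)
  -- `G` is not the `a`-face of `X`
  have hGne : G ≠ A.faceAt X a := by
    intro e
    apply A.adj_ne X a ha
    apply A.flag_ext
    intro k hk1 hk2
    by_cases hka : k = (a : ℤ)
    · rw [hka]; exact e
    · exact A.faceAt_adj ha hk1 hk2 hka
  have hXa : A.faceAt X a = A.faceAt (A.adj Ψ a) a := by
    rw [hX, A.faceAt_adj hb han1 han2 hne3]
  -- by the diamond condition, `G` is the `a`-face of `Ψ`
  have hGeq : G = A.faceAt Ψ a := by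
    rcases A.diamond ha hrG hGm hGp with h | h
    · exact h
    · exact absurd (h.trans hXa.symm) hGne
  -- `adj X a = adj Ψ b`
  have hXb : A.faceAt X b ≠ A.faceAt Ψ b := by
    intro e
    apply A.adj_ne (A.adj Ψ a) b hb
    apply A.flag_ext
    intro k hk1 hk2
    by_cases hkb : k = (b : ℤ)
    · rw [hkb, ← hX]
      rw [A.faceAt_adj ha hbn1 hbn2 hne4]
      exact e
    · exact A.faceAt_adj hb hk1 hk2 hkb
  have hkey : A.adj X a = A.adj Ψ b := by
    apply (A.adj_unique Ψ (A.adj X a) b hb ?_ ?_).symm.symm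
    · intro e
      apply hXb
      rw [← A.faceAt_adj ha hbn1 hbn2 hne4 (Ψ := X), e]
    · intro F hF hr
      have hbF := A.rank_le F
      have h1 := A.faceAt_eq Ψ F hF
      by_cases hra : A.rank F = (a : ℤ)
      · rw [← h1, hra, ← hGeq, hGdef]
        exact A.faceAt_mem _ _ han1 han2
      · rw [← h1, ← A.faceAt_adj ha hbF.1 hbF.2 (by omega) (Ψ := Ψ),
          ← A.faceAt_adj hb hbF.1 hbF.2 hr (Ψ := A.adj Ψ a), ← hX,
          ← A.faceAt_adj ha hbF.1 hbF.2 (by omega) (Ψ := X)]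
        exact A.faceAt_mem _ _ hbF.1 hbF.2
  calc A.adj (A.adj Ψ a) b = X := rfl
    _ = A.adj (A.adj X a) a := (A.adj_adj_s10 ha).symm
    _ = A.adj (A.adj Ψ b) a := by rw [hkey]

lemma rank_smul_faceAt (g : Face ≃o Face) (Ψ : Flag Face) :
    ∀ k : ℤ, -1 ≤ k → k ≤ (n : ℤ) → A.rank (g (A.faceAt Ψ k)) = k := by
  set f : ℤ → ℤ := fun k => A.rank (g (A.faceAt Ψ k)) with hf
  have hmono : ∀ k k' : ℤ, -1 ≤ k → k < k' → k' ≤ (n : ℤ) → f k < f k' := by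
    intro k k' h1 h2 h3
    apply A.rank_strictMono
    apply g.strictMono
    exact A.lt_of_rank_lt (A.faceAt_mem Ψ k h1 (by omega))
      (A.faceAt_mem Ψ k' (by omega) h3)
      (by rw [A.faceAt_rank Ψ k h1 (by omega), A.faceAt_rank Ψ k' (by omega) h3]; omega)
  have hlow : ∀ m : ℕ, ∀ k : ℤ, k = -1 + m → k ≤ (n : ℤ) → k ≤ f k := by
    intro m
    induction m with
    | zero => intro k hk _; rw [hk]; simpa using (A.rank_le _).1
    | succ p ih =>
      intro k hk hkn
      have h1 : k - 1 = -1 + (p : ℤ) := by push_cast at hk ⊢; omega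
      have h2 := ih (k - 1) (by push_cast at h1 ⊢; omega) (by omega)
      have h3 := hmono (k - 1) k (by omega) (by omega) hkn
      omega
  have hhigh : ∀ m : ℕ, ∀ k : ℤ, k = (n : ℤ) - m → -1 ≤ k → f k ≤ k := by
    intro m
    induction m with
    | zero => intro k hk _; rw [hk]; simpa using (A.rank_le _).2
    | succ p ih =>
      intro k hk hkn
      have h2 := ih (k + 1) (by push_cast at hk ⊢; omega) (by omega)
      have h3 := hmono k (k + 1) hkn (by omega) (by push_cast at hk; omega)
      omega
  intro k hk1 hk2
  have l : k ≤ A.rank (g (A.faceAt Ψ k)) := hlow (k + 1).toNat k (by omega) hk2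
  have h : A.rank (g (A.faceAt Ψ k)) ≤ k := hhigh ((n : ℤ) - k).toNat k (by omega) hk1
  omega

lemma rank_smul {g : Face ≃o Face} {Ψ : Flag Face} {F : Face} (hF : F ∈ Ψ) :
    A.rank (g F) = A.rank F := by
  have hb := A.rank_le F
  have h := A.rank_smul_faceAt g Ψ (A.rank F) hb.1 hb.2
  rwa [A.faceAt_eq Ψ F hF] at h

lemma smul_adj (g : Face ≃o Face) (Ψ : Flag Face) {m : ℕ} (hm : m < n) :
    g • A.adj Ψ m = A.adj (g • Ψ) m := by
  apply A.adj_unique (g • Ψ) (g • A.adj Ψ m) m hm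
  · intro e
    exact A.adj_ne Ψ m hm (smul_left_cancel g e)
  · intro F hF hr
    rcases mem_smul_iff.1 hF with ⟨G, hG, rfl⟩
    rw [A.rank_smul hG] at hr
    exact smul_mem_smul (A.adj_mem Ψ m hm G hG hr)

lemma smul_flag_eq_of_base (A : AbstractPolytope n Face) {g : Face ≃o Face} {Φ : Flag Face} (h : g • Φ = Φ) :
    ∀ Ψ : Flag Face, g • Ψ = Ψ := by
  intro Ψ
  obtain ⟨l, c, hc0, hcl, hstep⟩ := A.connected Φ Ψ
  suffices h' : ∀ m, m ≤ l → g • c m = c m by rw [← hcl]; exact h' l le_rfl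
  intro m
  induction m with
  | zero => intro _; rw [hc0]; exact h
  | succ p ih =>
    intro hp
    obtain ⟨k, hkn, he, -⟩ := hstep p (by omega)
    rw [he, A.smul_adj g (c p) hkn, ih (by omega)]

lemma fix_face (A : AbstractPolytope n Face) {g : Face ≃o Face} {Φ : Flag Face} (h : g • Φ = Φ) (F : Face) :
    g F = F := by
  obtain ⟨M, hM, hsub⟩ := (Set.subsingleton_singleton (a := F)).isChain
    (r := (· ≤ ·)).exists_maxChain
  set Ψ : Flag Face := Flag.ofIsMaxChain M hM with hΨ
  have hFΨ : F ∈ Ψ := hsub rfl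
  have hfix := A.smul_flag_eq_of_base h Ψ
  have hgF : g F ∈ Ψ := by rw [← hfix]; exact smul_mem_smul hFΨ
  have h1 := A.faceAt_eq Ψ (g F) hgF
  rw [A.rank_smul hFΨ] at h1
  rw [← h1, A.faceAt_eq Ψ F hFΨ]

lemma eq_of_smul_flag_eq (A : AbstractPolytope n Face) {g h : Face ≃o Face} {Φ : Flag Face}
    (e : g • Φ = h • Φ) : g = h := by
  have h0 : (h⁻¹ * g) • Φ = Φ := by rw [mul_smul, e, inv_smul_smul]
  have hf := A.fix_face h0
  have h1 : h⁻¹ * g = 1 := by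
    apply OrderIso.ext
    funext F
    have := hf F
    rw [RelIso.mul_apply] at this
    exact this
  calc g = h * (h⁻¹ * g) := by group
    _ = h * 1 := by rw [h1]
    _ = h := mul_one h

end AbstractPolytope

open AbstractPolytope in
/-- If `i ∈ I` and `j, i+1 ∉ I` with `|j - i| ≥ 2`, then
`α_{j,i+1} ρ_i α_{i+1,j} = α_{i+1,i,i+1}`.  (Products are written in
function-composition order, reversing the paper's right-action order.) -/
theorem stmt10 {n : ℕ} {Face : Type*} [PartialOrder Face] (A : AbstractPolytope n Face)
    (I : Set ℕ) (h2 : A.TwoOrbit) (hI : A.InClass I)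
    (Φ : Flag Face)
    (ρ : ℕ → (Face ≃o Face)) (α : ℕ → ℕ → (Face ≃o Face)) (β : ℕ → ℕ → (Face ≃o Face))
    (hρ : ∀ i ∈ I, (ρ i) • Φ = A.adj Φ i)
    (hα : ∀ j k : ℕ, j < n → k < n → j ∉ I → k ∉ I →
        (α j k) • Φ = A.adj (A.adj Φ j) k)
    (hβ : ∀ j : ℕ, ∀ i ∈ I, j < n → j ∉ I →
        (β j i) • Φ = A.adj (A.adj (A.adj Φ j) i) j)
    (i j : ℕ) (hiI : i ∈ I) (hjn : j < n) (hjI : j ∉ I)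
    (hi1n : i + 1 < n) (hi1I : i + 1 ∉ I) (hdist : i + 2 ≤ j ∨ j + 2 ≤ i) :
    α (i + 1) j * ρ i * α j (i + 1) = β (i + 1) i := by
  have hin : i < n := hI.1 i hiI
  apply A.eq_of_smul_flag_eq (Φ := Φ)
  rw [mul_smul, mul_smul, hα j (i + 1) hjn hi1n hjI hi1I, hβ (i + 1) i hiI hi1n hi1I,
    A.smul_adj _ _ hi1n, A.smul_adj _ _ hjn, hρ i hiI,
    A.smul_adj _ _ hi1n, A.smul_adj _ _ hjn, A.smul_adj _ _ hin,
    hα (i + 1) j hi1n hjn hi1I hjI]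
  congr 1
  rw [A.adj_comm hjn hin (by omega)]
  exact A.adj_adj_s10 hjn
end
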